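/- The number of parking functions of length n is (n+1)^{n-1}. -/

import Mathlib

/-- The weakly increasing sorted version of a vector of naturals. -/
def sortPF {n : ℕ} (p : Fin n → ℕ) : List ℕ :=
  Multiset.sort (↑(List.ofFn p) : Multiset ℕ) (· ≤ ·)

/-- `p` is an `a`-parking function of length `n`: all entries are positive and the
`i`-th entry (0-based) of the sorted version is at most `a + i` (i.e. `a + i - 1` 1-based). -/
def IsAPF (a : ℕ) {n : ℕ} (p : Fin n → ℕ) : Prop :=
  (∀ i, 1 ≤ p i) ∧ ∀ i : Fin n, (sortPF p).getD i 0 ≤ a + (i : ℕ)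

/-- `p` is an ordinary parking function of length `n`. -/
def IsPF {n : ℕ} (p : Fin n → ℕ) : Prop :=
  (∀ i, 1 ≤ p i ∧ p i ≤ n) ∧ ∀ i : Fin n, (sortPF p).getD i 0 ≤ (i : ℕ) + 1

/-!
Pollak's circular argument. Read preference vectors modulo `n + 1`, with entries in
`{0, …, n}`; adding a constant to every entry gives `n + 1` distinct vectors. Let `N t` count
the entries equal to `t` and `D j = ∑_{t < j} N t - j`. Since the `N t` sum to `n` over any
window of length `n + 1`, `D` drops by exactly one per period, so among the `n + 1` shifts
exactly one makes all partial excesses nonnegative — the one starting at the first minimum of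
`D` in a period — and these are the parking functions. Hence there are `(n + 1)^n / (n + 1)`.
-/

open Finset

theorem List.Pairwise.getElem_le_iff_lt_countP {l : List ℕ} (hl : l.Pairwise (· ≤ ·)) {i : ℕ}
    (hi : i < l.length) (k : ℕ) : l[i] ≤ k ↔ i < l.countP (· ≤ k) := by
  induction l generalizing i with
  | nil => simp at hi
  | cons a l ih =>
    obtain ⟨ha_le, hl⟩ := List.pairwise_cons.1 hl
    by_cases ha : a ≤ k
    · cases i with
      | zero => simp [ha]
      | succ i => simp [ha, ih hl (Nat.lt_of_succ_lt_succ hi)]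
    · have hl0 : l.countP (· ≤ k) = 0 := List.countP_eq_zero.2 fun x hx => by
        simpa using (lt_of_not_ge ha).trans_le (ha_le x hx)
      rw [List.countP_cons_of_neg (by simpa using ha), hl0]
      cases i with
      | zero => simpa using ha
      | succ i =>
        exact iff_of_false (fun h => ha ((ha_le _ (List.getElem_mem _)).trans h)) (by omega)

theorem countP_sortPF {n : ℕ} (p : Fin n → ℕ) (q : ℕ → Prop) [DecidablePred q] :
    (sortPF p).countP (q ·) = #{i | q (p i)} := by
  rw [← Multiset.coe_countP, sortPF, Multiset.sort_eq, ← Fin.univ_val_map, Multiset.countP_map]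
  rfl

theorem sortPF_getD_le_iff {n : ℕ} (p : Fin n → ℕ) (i : Fin n) (k : ℕ) :
    (sortPF p).getD i 0 ≤ k ↔ i < #{j | p j ≤ k} := by
  have hi : (i : ℕ) < (sortPF p).length := by simp [sortPF]
  have hsorted : (sortPF p).Pairwise (· ≤ ·) := Multiset.pairwise_sort _ _
  rw [List.getD_eq_getElem _ _ hi, hsorted.getElem_le_iff_lt_countP hi,
    countP_sortPF p (· ≤ k)]

theorem isPF_iff_card {n : ℕ} (p : Fin n → ℕ) :
    IsPF p ↔ (∀ i, 1 ≤ p i) ∧ ∀ k ≤ n, k ≤ #{i | p i ≤ k} := by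
  have hcount : (∀ i : Fin n, (sortPF p).getD i 0 ≤ i + 1) ↔ ∀ k ≤ n, k ≤ #{i | p i ≤ k} := by
    simp only [sortPF_getD_le_iff, Nat.lt_iff_add_one_le]
    refine ⟨fun h k hk => ?_, fun h i => h _ i.2⟩
    cases k with
    | zero => exact Nat.zero_le _
    | succ k => exact h ⟨k, hk⟩
  rw [IsPF, hcount]
  refine ⟨fun h => ⟨fun i => (h.1 i).1, h.2⟩, fun h => ⟨fun i => ⟨h.1 i, ?_⟩, h.2⟩⟩
  have hall : #{j | p j ≤ n} = #(univ : Finset (Fin n)) :=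
    le_antisymm (card_filter_le _ _) (by simpa using h.2 n le_rfl)
  exact card_filter_eq_iff.1 hall i (mem_univ i)

theorem existsUnique_lt_forall_le_add {m : ℕ} (hm : 0 < m) {P : ℕ → ℤ}
    (hP : ∀ j, P (j + m) = P j - 1) : ∃! b, b < m ∧ ∀ k < m, P b ≤ P (b + k) := by
  classical
  have hmin : ∃ b, b < m ∧ ∀ j < m, P b ≤ P j := by
    obtain ⟨b, hb, hbmin⟩ := exists_min_image (range m) P ⟨0, mem_range.2 hm⟩
    exact ⟨b, mem_range.1 hb, fun j hj => hbmin j (mem_range.2 hj)⟩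
  have hle : ∀ b c, (b < m ∧ ∀ k < m, P b ≤ P (b + k)) → (c < m ∧ ∀ k < m, P c ≤ P (c + k)) →
      b ≤ c := by
    -- otherwise `P c ≤ P b ≤ P (c + m) = P c - 1`
    rintro b c ⟨hbm, hb⟩ ⟨hcm, hc⟩
    by_contra! hcb
    have h₁ := hc (b - c) (by omega)
    have h₂ := hb (c + m - b) (by omega)
    rw [Nat.add_sub_cancel' hcb.le] at h₁
    rw [Nat.add_sub_cancel' (by omega), hP] at h₂
    omega
  refine existsUnique_of_exists_of_unique ⟨Nat.find hmin, (Nat.find_spec hmin).1, fun k hk => ?_⟩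
    fun b c hb hc => le_antisymm (hle b c hb hc) (hle c b hc hb)
  obtain ⟨hbm, hbP⟩ := Nat.find_spec hmin
  set b := Nat.find hmin
  by_cases hbk : b + k < m
  · exact hbP _ hbk
  · -- the first minimiser lies strictly below the earlier values, which drop by one on wrapping
    have hwrap : P (b + k) = P (b + k - m) - 1 := by rw [← hP, Nat.sub_add_cancel (by omega)]
    have hlt : P b < P (b + k - m) := by
      refine lt_of_le_of_ne (hbP _ (by omega)) fun heq => ?_
      exact Nat.find_min hmin (show b + k - m < b by omega) ⟨by omega, heq ▸ hbP⟩
    omega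

section
variable {ι : Type*} [Fintype ι] {m : ℕ}

/-- Zero-based parking functions with entries read in `{0, …, m - 1}`: `f` corresponds to the
ordinary preference vector `fun i => (f i).val + 1`. -/
def IsPFMod (f : ι → ZMod m) : Prop := ∀ k < m, k ≤ #{i | (f i).val < k}

def excess (f : ι → ZMod m) (j : ℕ) : ℤ := ∑ t ∈ range j, (#{i | f i = t} : ℤ) - j

variable [NeZero m]

theorem card_val_lt_eq_sum (f : ι → ZMod m) {k : ℕ} (hk : k ≤ m) :
    #{i | (f i).val < k} = ∑ t ∈ range k, #{i | f i = t} := by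
  rw [card_eq_sum_card_fiberwise (f := fun i => (f i).val) (t := range k)
    fun i hi => mem_range.2 (mem_filter.1 hi).2]
  refine sum_congr rfl fun t ht => congrArg card ?_
  ext i
  have htm : t < m := (mem_range.1 ht).trans_le hk
  simp only [mem_filter, mem_univ, true_and]
  constructor
  · rintro ⟨-, rfl⟩; exact (ZMod.natCast_zmod_val _).symm
  · intro h; rw [h, ZMod.val_cast_of_lt htm]; exact ⟨mem_range.1 ht, rfl⟩

theorem excess_add_period (f : ι → ZMod m) (j : ℕ) :
    excess f (j + m) = excess f j + Fintype.card ι - m := by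
  have hfull : ∑ t ∈ range m, #{i | f i = t} = Fintype.card ι := by
    rw [← card_val_lt_eq_sum f le_rfl, filter_true_of_mem fun i _ => ZMod.val_lt (f i), card_univ]
  have hperiod : ∑ t ∈ range (m + j), (#{i | f i = t} : ℤ)
      = Fintype.card ι + ∑ t ∈ range j, (#{i | f i = t} : ℤ) := by
    rw [sum_range_add]
    congr 1
    · exact_mod_cast hfull
    · simp
  rw [excess, excess, add_comm j, hperiod]
  push_cast; ring

theorem card_sub_val_lt (f : ι → ZMod m) (c : ZMod m) {k : ℕ} (hk : k ≤ m) :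
    (#{i | (f i - c).val < k} : ℤ) - k = excess f (c.val + k) - excess f c.val := by
  have hshift : #{i | (f i - c).val < k} = ∑ t ∈ range k, #{i | f i = ↑(c.val + t)} := by
    rw [card_val_lt_eq_sum _ hk]
    refine sum_congr rfl fun t _ => ?_
    simp [sub_eq_iff_eq_add']
  rw [excess, excess, sum_range_add, hshift]
  push_cast; ring

theorem isPFMod_sub_iff (f : ι → ZMod m) (c : ZMod m) :
    IsPFMod (fun i => f i - c) ↔ ∀ k < m, excess f c.val ≤ excess f (c.val + k) := by
  simp only [IsPFMod]
  refine forall₂_congr fun k hk => ?_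
  have := card_sub_val_lt f c hk.le
  constructor <;> intro h <;> omega

theorem existsUnique_isPFMod_sub (hm : Fintype.card ι + 1 = m) (f : ι → ZMod m) :
    ∃! c : ZMod m, IsPFMod (fun i => f i - c) := by
  obtain ⟨b, ⟨hbm, hb⟩, hbuniq⟩ := existsUnique_lt_forall_le_add (NeZero.pos m)
    (fun j => by rw [excess_add_period]; omega : ∀ j, excess f (j + m) = excess f j - 1)
  refine ⟨b, (isPFMod_sub_iff f _).2 ?_, fun c hc => ?_⟩
  · rwa [ZMod.val_cast_of_lt hbm]
  · rw [← hbuniq c.val ⟨c.val_lt, (isPFMod_sub_iff f c).1 hc⟩, ZMod.natCast_zmod_val]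

theorem bijective_isPFMod_add_const (hm : Fintype.card ι + 1 = m) :
    Function.Bijective fun gc : {g : ι → ZMod m // IsPFMod g} × ZMod m =>
      fun i => gc.1.1 i + gc.2 := by
  refine ⟨fun ⟨⟨g, hg⟩, c⟩ ⟨⟨g', hg'⟩, c'⟩ h => ?_, fun f => ?_⟩
  · have hf : ∀ i, g i + c = g' i + c' := congrFun h
    have hc : c = c' := (existsUnique_isPFMod_sub hm fun i => g i + c).unique
      (by simpa using hg) (by simpa [hf] using hg')
    subst hc
    simp only [Prod.mk.injEq, Subtype.mk.injEq, and_true]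
    funext i
    simpa using hf i
  · obtain ⟨c, hc, -⟩ := existsUnique_isPFMod_sub hm f
    exact ⟨⟨⟨_, hc⟩, c⟩, by simp⟩

theorem card_isPFMod (hm : Fintype.card ι + 1 = m) :
    Nat.card {f : ι → ZMod m // IsPFMod f} = m ^ (Fintype.card ι - 1) := by
  have h := Nat.card_congr (Equiv.ofBijective _ (bijective_isPFMod_add_const hm))
  simp only [Nat.card_prod, Nat.card_fun, Nat.card_eq_fintype_card, ZMod.card] at h
  refine Nat.eq_of_mul_eq_mul_right (NeZero.pos m) (h.trans ?_)
  rcases Nat.eq_zero_or_pos (Fintype.card ι) with h0 | hpos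
  · simp [h0, ← hm]
  · rw [← pow_succ, Nat.sub_add_cancel hpos]

end

theorem isPF_val_add_one_iff {n : ℕ} (f : Fin n → ZMod (n + 1)) :
    IsPF (fun i => (f i).val + 1) ↔ IsPFMod f := by
  simp only [isPF_iff_card, IsPFMod, Nat.add_one_le_iff, Nat.lt_add_one_iff,
    le_add_iff_nonneg_left, zero_le, implies_true, true_and]

theorem bijective_isPFMod_val_add_one (n : ℕ) :
    Function.Bijective fun f : {f : Fin n → ZMod (n + 1) // IsPFMod f} =>
      (⟨fun i => (f.1 i).val + 1, (isPF_val_add_one_iff f.1).2 f.2⟩ : {p // IsPF p}) := by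
  refine ⟨fun f g h => ?_, fun ⟨p, hp⟩ => ?_⟩
  · ext i
    exact ZMod.val_injective _ (Nat.succ_injective (congrFun (congrArg Subtype.val h) i))
  · have hp' : ∀ i, (((p i - 1 : ℕ) : ZMod (n + 1)).val + 1) = p i := fun i => by
      obtain ⟨hpos, hle⟩ := hp.1 i
      rw [ZMod.val_cast_of_lt (by omega)]
      omega
    refine ⟨⟨fun i => (p i - 1 : ℕ), (isPF_val_add_one_iff _).1 ?_⟩, ?_⟩
    · simpa only [hp'] using hp
    · ext i; exact hp' i

/-- The number of parking functions of length `n` is `(n+1)^(n-1)`. -/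
theorem num_parking_functions (n : ℕ) :
    Nat.card {p : Fin n → ℕ // IsPF p} = (n + 1) ^ (n - 1) := by
  rw [← Nat.card_congr (Equiv.ofBijective _ (bijective_isPFMod_val_add_one n)),
    card_isPFMod (by simp), Fintype.card_fin]
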